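/- arXiv:1009.3476 — 3 statements merged into one kernel-verified Lean document; each statement's English description precedes it below -/
import Mathlib

section
/- For arbitrary n×n matrices C_1,…,C_n over A, one has the equality of operators A_n·⟨C_1,…,C_n⟩ = A_n·⟨⟨C_1,…,C_n⟩⟩. (In the paper this shows that the antisymmetrized product defining the Sklyanin determinant may be computed with the simpler factors Π_k in place of the products of R-matrices.) -/
/-!
STATEMENT 0: For arbitrary n×n matrices C_1,…,C_n over A,
A_n·⟨C_1,…,C_n⟩ = A_n·⟨⟨C_1,…,C_n⟩⟩.
Operators on the n-fold tensor power of K^n (K = RatFunc ℚ) with coefficients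
in a K-algebra A are modeled as matrices indexed by tuples f : Fin n → Fin n,
where the point `i : Fin n` carries the label `i+1 ∈ {1,…,n}`.
-/

noncomputable section

abbrev K : Type := RatFunc ℚ

/-- The variable u. -/
def u : K := RatFunc.X

/-- Operators on the n-fold tensor power of K^n with coefficients in A. -/
abbrev Op (A : Type*) (n : ℕ) := Matrix (Fin n → Fin n) (Fin n → Fin n) A

variable {A : Type*} [Ring A] [Algebra K A] {n : ℕ}

/-- `act C s` = C^(s): the matrix C acting on the s-th tensor factor. -/
def act (C : Matrix (Fin n) (Fin n) A) (s : Fin n) : Op A n :=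
  fun f g => if ∀ t, t ≠ s → f t = g t then C (f s) (g s) else 0

/-- `Pop σ` = P_σ: permutation of the tensor factors according to σ. -/
def Pop (σ : Equiv.Perm (Fin n)) : Op A n :=
  fun f g => if f = g ∘ ⇑σ⁻¹ then (1 : A) else 0

/-- P_{ij} (with P_{ii} = Id). -/
def Pij (i j : Fin n) : Op A n := Pop (Equiv.swap i j)

/-- R_{ij} = 1 − (2u−i−j+2)⁻¹ P_{ij}, where i, j carry labels i+1, j+1. -/
def Rop (i j : Fin n) : Op A n :=
  (1 : Op A n) -
    ((2 * u - ((i : ℕ) + 1 : K) - ((j : ℕ) + 1 : K) + 2)⁻¹ : K) • Pij i j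

/-- Π_k = 1 − (2u−k−n+2)⁻¹ ∑_{i=k+1}^n P_{ki}, where k carries the label k+1. -/
def Piop (k : Fin n) : Op A n :=
  (1 : Op A n) -
    ((2 * u - ((k : ℕ) + 1 : K) - (n : K) + 2)⁻¹ : K) •
      ∑ i ∈ Finset.univ.filter (fun i => k < i), Pij k i

/-- The antisymmetrizer A_n = ∑_{σ ∈ S_n} sgn(σ) P_σ. -/
def antisym : Op A n :=
  ∑ σ : Equiv.Perm (Fin n), (((Equiv.Perm.sign σ : ℤ) : K)) • Pop σ

/-- The ordered product R_{k,k+1} R_{k,k+2} ⋯ R_{k,n} (equal to 1 for k = n). -/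
def Rrow (k : Fin n) : Op A n :=
  (((List.finRange n).filter (fun i => decide (k < i))).map (fun i => Rop k i)).prod

/-- ⟨C_1,…,C_n⟩ = C_1^(1)·(R_{12}⋯R_{1n})·C_2^(2)·(R_{23}⋯R_{2n})⋯C_n^(n). -/
def bra (C : Fin n → Matrix (Fin n) (Fin n) A) : Op A n :=
  ((List.finRange n).map (fun s => act (C s) s * Rrow s)).prod

/-- ⟨⟨C_1,…,C_n⟩⟩ = C_1^(1)·Π_1·C_2^(2)·Π_2⋯Π_{n−1}·C_n^(n). -/
def braket (C : Fin n → Matrix (Fin n) (Fin n) A) : Op A n :=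
  ((List.finRange n).map (fun s => act (C s) s * Piop s)).prod

/-!
Say that `W` is antisymmetric on a set `S` of tensor positions if `W P_τ = sgn(τ) W` for every
permutation `τ` fixing the positions outside `S`. If `W` is antisymmetric on the positions after
`k`, then `W P_{ki} P_{kj} = W P_{ij} P_{ki} = -W P_{ki}` for distinct `i, j > k`, so multiplying
out `W R_{k,k+1} ⋯ R_{kn}` from the left leaves only the terms linear in the `P_{ki}`. Their
coefficients all equal `d = (2u-k-n+2)⁻¹`, because `(2u-k-i+2)⁻¹ (1 + (n-i) d) = d`; hence
`W R_{k,k+1} ⋯ R_{kn} = W Π_k`. Now `A_n` is antisymmetric on all positions, and right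
multiplication by `C_k^(k)` and by `Π_k` keeps antisymmetry on the positions after `k`, since these
operators commute with every such `P_τ`. So the rows of `R`-matrices in `⟨C_1,…,C_n⟩` can be
replaced by the `Π_k` one at a time, from left to right.
-/

section Permutations

variable {R : Type*} [Ring R]

theorem mul_Pop_apply (M : Op R n) (τ : Equiv.Perm (Fin n)) (f g : Fin n → Fin n) :
    (M * Pop τ : Op R n) f g = M f (g ∘ ⇑τ⁻¹) := by
  simp [Matrix.mul_apply, Pop]

theorem Pop_mul_apply (M : Op R n) (τ : Equiv.Perm (Fin n)) (f g : Fin n → Fin n) :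
    (Pop τ * M : Op R n) f g = M (f ∘ ⇑τ) g := by
  simp [Matrix.mul_apply, Pop, Equiv.Perm.inv_def, Equiv.eq_comp_symm, eq_comm]

theorem Pop_mul_Pop (σ τ : Equiv.Perm (Fin n)) : (Pop σ * Pop τ : Op R n) = Pop (σ * τ) := by
  ext f g
  simp only [mul_Pop_apply, Pop, Equiv.Perm.mul_def]
  rfl

theorem Pop_mul_act (τ : Equiv.Perm (Fin n)) (C : Matrix (Fin n) (Fin n) R) (s : Fin n) :
    (Pop τ * act C s : Op R n) = act C (τ s) * Pop τ := by
  ext f g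
  simp only [Pop_mul_apply, mul_Pop_apply, act, Function.comp_apply]
  congr 1
  · conv_rhs => rw [← τ.forall_congr_right]
    simp
  · simp

theorem Pij_mul_Pop (i j : Fin n) (τ : Equiv.Perm (Fin n)) :
    (Pij i j * Pop τ : Op R n) = Pop τ * Pij (τ⁻¹ i) (τ⁻¹ j) := by
  rw [Pij, Pij, Pop_mul_Pop, Pop_mul_Pop, Equiv.swap_mul_eq_mul_swap]

theorem Pij_mul_Pij {s i j : Fin n} (hjs : j ≠ s) (hji : j ≠ i) :
    (Pij s i * Pij s j : Op R n) = Pij i j * Pij s i := by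
  rw [Pij, Pij, Pij, Pop_mul_Pop, Pop_mul_Pop, Equiv.mul_swap_eq_swap_mul, Equiv.swap_apply_left,
    Equiv.swap_apply_of_ne_of_ne hjs hji]

end Permutations

section Antisymmetry

variable {R : Type*} [Ring R]

def IsAntisymOn (W : Op R n) (S : Set (Fin n)) : Prop :=
  ∀ τ : Equiv.Perm (Fin n), (∀ x ∉ S, τ x = x) → W * Pop τ = Equiv.Perm.sign τ • W

variable {W : Op R n} {S : Set (Fin n)}

theorem IsAntisymOn.mono {T : Set (Fin n)} (hW : IsAntisymOn W S) (hTS : T ⊆ S) :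
    IsAntisymOn W T :=
  fun τ hτ => hW τ fun x hx => hτ x fun h => hx (hTS h)

theorem IsAntisymOn.mul_of_commute {M : Op R n} (hW : IsAntisymOn W S)
    (hM : ∀ τ : Equiv.Perm (Fin n), (∀ x ∉ S, τ x = x) → M * Pop τ = Pop τ * M) :
    IsAntisymOn (W * M) S := by
  intro τ hτ
  rw [mul_assoc, hM τ hτ, ← mul_assoc, hW τ hτ, smul_mul_assoc]

theorem IsAntisymOn.mul_act (hW : IsAntisymOn W S) (C : Matrix (Fin n) (Fin n) R) {s : Fin n}
    (hs : s ∉ S) : IsAntisymOn (W * act C s) S :=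
  hW.mul_of_commute fun τ hτ => by rw [Pop_mul_act, hτ s hs]

theorem IsAntisymOn.mul_Pij (hW : IsAntisymOn W S) {i j : Fin n} (hi : i ∉ S) (hj : j ∉ S) :
    IsAntisymOn (W * Pij i j) S :=
  hW.mul_of_commute fun τ hτ => by
    rw [Pij_mul_Pop, Equiv.Perm.inv_eq_iff_eq.2 (hτ i hi).symm,
      Equiv.Perm.inv_eq_iff_eq.2 (hτ j hj).symm]

theorem IsAntisymOn.mul_Pij_eq_neg (hW : IsAntisymOn W S) {i j : Fin n} (hi : i ∈ S)
    (hj : j ∈ S) (hij : i ≠ j) : W * Pij i j = -W := by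
  rw [Pij, hW _ fun x hx => Equiv.swap_apply_of_ne_of_ne (by rintro rfl; exact hx hi)
    (by rintro rfl; exact hx hj), Equiv.Perm.sign_swap hij, Units.neg_smul, one_smul]

end Antisymmetry

theorem Piop_mul_Pop {k : Fin n} {τ : Equiv.Perm (Fin n)} (hτ : ∀ x ≤ k, τ x = x) :
    (Piop k * Pop τ : Op A n) = Pop τ * Piop k := by
  have hk : τ⁻¹ k = k := Equiv.Perm.inv_eq_iff_eq.2 (hτ k le_rfl).symm
  have hsupp : {x | τ⁻¹ x ≠ x} ⊆ ↑(Finset.univ.filter fun i => k < i) := by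
    intro x hx
    by_contra hkx
    exact hx (Equiv.Perm.inv_eq_iff_eq.2 (hτ x (by simpa using hkx)).symm)
  rw [Piop, sub_mul, mul_sub, one_mul, mul_one, smul_mul_assoc, mul_smul_comm, Finset.sum_mul,
    Finset.mul_sum]
  simp only [Pij_mul_Pop, hk]
  rw [Equiv.Perm.sum_comp τ⁻¹ _ (fun i => Pop τ * Pij k i) hsupp]

theorem IsAntisymOn.mul_Piop {W : Op A n} {S : Set (Fin n)} (hW : IsAntisymOn W S) {k : Fin n}
    (hk : ∀ x ≤ k, x ∉ S) : IsAntisymOn (W * Piop k) S :=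
  hW.mul_of_commute fun _ hτ => Piop_mul_Pop fun x hx => hτ x (hk x hx)

theorem isAntisymOn_antisym (S : Set (Fin n)) : IsAntisymOn (antisym : Op A n) S := by
  intro τ _
  rw [antisym, Finset.sum_mul, Finset.smul_sum]
  refine Fintype.sum_equiv (Equiv.mulRight τ) _ _ fun σ => ?_
  rw [smul_mul_assoc, Pop_mul_Pop, Equiv.coe_mulRight, Units.smul_def, ← Int.cast_smul_eq_zsmul K,
    smul_smul, Equiv.Perm.sign_mul]
  congr 1
  rcases Int.units_eq_one_or (Equiv.Perm.sign τ) with h | h <;> simp [h]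

theorem IsAntisymOn.mul_prod_one_sub_smul_Pij {W : Op A n} {s : Fin n} {L : List (Fin n)}
    (hW : IsAntisymOn W {x | x ∈ L}) (hL : L.Nodup) (hs : s ∉ L) {c : Fin n → K} {d : K}
    (hc : ∀ i L', i :: L' <:+ L → c i * (1 + d * L'.length) = d) :
    W * (L.map fun i => 1 - c i • Pij s i).prod = W * (1 - d • (L.map (Pij s)).sum) := by
  induction L generalizing W with
  | nil => simp
  | cons i L ih =>
    obtain ⟨hiL, hL⟩ := List.nodup_cons.1 hL
    have hsL : s ∉ L := fun h => hs (List.mem_cons_of_mem i h)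
    have hWL : IsAntisymOn W {x | x ∈ L} := hW.mono fun x hx => List.mem_cons_of_mem i hx
    have hcL : ∀ j L', j :: L' <:+ L → c j * (1 + d * L'.length) = d :=
      fun j L' h => hc j L' (h.trans (List.suffix_cons i L))
    have hcollapse : W * Pij s i * (L.map (Pij s)).sum = -((L.length : K) • (W * Pij s i)) := by
      have hterm : ∀ j ∈ L, W * Pij s i * Pij s j = -(W * Pij s i) := fun j hj => by
        rw [mul_assoc, Pij_mul_Pij (ne_of_mem_of_not_mem hj hsL) (ne_of_mem_of_not_mem hj hiL),
          ← mul_assoc, hW.mul_Pij_eq_neg (List.mem_cons_self ..) (List.mem_cons_of_mem i hj)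
            (ne_of_mem_of_not_mem hj hiL).symm, neg_mul]
      rw [← List.sum_map_mul_left, List.map_congr_left hterm, List.map_const', List.sum_replicate,
        Nat.cast_smul_eq_nsmul, smul_neg]
    have hrow :
        W * Pij s i * (1 - d • (L.map (Pij s)).sum) = (1 + d * L.length) • (W * Pij s i) := by
      rw [mul_sub, mul_one, mul_smul_comm, hcollapse, smul_neg, sub_neg_eq_add, add_smul, one_smul,
        mul_smul]
    simp only [List.map_cons, List.prod_cons, List.sum_cons]
    rw [sub_mul, one_mul, mul_sub, smul_mul_assoc, mul_smul_comm, ← mul_assoc W (Pij s i),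
      ih hWL hL hsL hcL, ih (hWL.mul_Pij hsL hiL) hL hsL hcL, hrow, smul_smul,
      hc i L List.suffix_rfl]
    simp only [mul_sub, mul_one, mul_smul_comm, mul_add, smul_add]
    abel

theorem List.Pairwise.eq_filter_lt_of_cons_suffix {α : Type*} [LinearOrder α] {L L' : List α}
    {i : α} (hL : L.Pairwise (· < ·)) (h : i :: L' <:+ L) :
    L' = L.filter (i < ·) := by
  obtain ⟨P, rfl⟩ := h
  obtain ⟨-, hiL', hPL'⟩ := List.pairwise_append.1 hL
  refine hiL'.of_cons.eq_of_mem_iff (hL.filter _) fun x => ?_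
  simp only [List.mem_filter, List.mem_append, List.mem_cons, decide_eq_true_eq]
  constructor
  · intro hx
    exact ⟨Or.inr (Or.inr hx), List.rel_of_pairwise_cons hiL' hx⟩
  · rintro ⟨hx | rfl | hx, hix⟩
    · exact absurd (hPL' x hx i List.mem_cons_self) (lt_asymm hix)
    · exact absurd hix (lt_irrefl x)
    · exact hx

theorem length_filter_lt_finRange (i : Fin n) :
    ((List.finRange n).filter fun x => decide (i < x)).length = n - 1 - i := by
  rw [← List.toFinset_card_of_nodup ((List.nodup_finRange n).filter _), List.toFinset_filter,
    List.toFinset_finRange, ← Fin.card_Ioi, ← Finset.filter_lt_eq_Ioi]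
  simp

theorem sum_filter_lt_eq_sum_map_filter_finRange {M : Type*} [AddCommMonoid M] (k : Fin n)
    (f : Fin n → M) :
    ∑ i ∈ Finset.univ.filter (fun i => k < i), f i =
      (((List.finRange n).filter fun x => decide (k < x)).map f).sum := by
  rw [← List.sum_toFinset f ((List.nodup_finRange n).filter _), List.toFinset_filter,
    List.toFinset_finRange]
  simp

theorem two_mul_u_add_intCast_ne_zero (m : ℤ) : 2 * u + (m : K) ≠ 0 := by
  intro h
  have hu : u = algebraMap ℚ K (-m / 2) := by
    rw [map_div₀, map_neg, map_intCast, map_ofNat]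
    linear_combination h / 2
  refine RatFunc.transcendental_X (K := ℚ) ?_
  convert hu ▸ isAlgebraic_algebraMap (-m / 2 : ℚ)
  · exact Subsingleton.elim _ _
  · rfl

-- The scalars in `Rop k i = 1 - Rcoef k i • Pij k i` and `Piop k = 1 - Picoef k • ∑_{i>k} Pij k i`.
def Rcoef (k i : Fin n) : K := (2 * u - ((k : ℕ) + 1 : K) - ((i : ℕ) + 1 : K) + 2)⁻¹

def Picoef (k : Fin n) : K := (2 * u - ((k : ℕ) + 1 : K) - (n : K) + 2)⁻¹

theorem Rcoef_mul_one_add_Picoef_mul (k i : Fin n) :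
    Rcoef k i * (1 + Picoef k * ((n - 1 - i : ℕ) : K)) = Picoef k := by
  have hx : 2 * u - ((k : ℕ) + 1 : K) - (n : K) + 2 ≠ 0 := by
    convert two_mul_u_add_intCast_ne_zero (1 - k - n) using 1; push_cast; ring
  have hy : 2 * u - ((k : ℕ) + 1 : K) - ((i : ℕ) + 1 : K) + 2 ≠ 0 := by
    convert two_mul_u_add_intCast_ne_zero (-k - i) using 1; push_cast; ring
  rw [Rcoef, Picoef, Nat.sub_sub, Nat.cast_sub (by omega)]
  field_simp
  push_cast
  ring

theorem IsAntisymOn.mul_Rrow_eq_mul_Piop {W : Op A n} {k : Fin n}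
    (hW : IsAntisymOn W {x | k < x}) : W * Rrow k = W * Piop k := by
  set L := (List.finRange n).filter (k < ·) with hL
  have hsorted : L.Pairwise (· < ·) := (List.pairwise_lt_finRange n).filter _
  have hc : ∀ i L', i :: L' <:+ L → Rcoef k i * (1 + Picoef k * L'.length) = Picoef k := by
    intro i L' h
    have hki : k < i := by simpa [hL] using h.subset List.mem_cons_self
    have hL' : L' = (List.finRange n).filter (i < ·) := by
      rw [hsorted.eq_filter_lt_of_cons_suffix h, hL, List.filter_filter]
      exact List.filter_congr fun x _ => by simpa using hki.trans
    rw [hL', length_filter_lt_finRange]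
    exact Rcoef_mul_one_add_Picoef_mul k i
  have hWL : IsAntisymOn W {x | x ∈ L} := hW.mono fun x hx => by simpa [hL] using hx
  rw [Piop, sum_filter_lt_eq_sum_map_filter_finRange]
  exact hWL.mul_prod_one_sub_smul_Pij hsorted.nodup (by simp [hL]) hc

theorem IsAntisymOn.mul_prod_act_Rrow_eq_mul_prod_act_Piop {W : Op A n} {L : List (Fin n)}
    (C : Fin n → Matrix (Fin n) (Fin n) A) (hL : L <:+ List.finRange n)
    (hW : IsAntisymOn W {x | x ∈ L}) :
    W * (L.map fun s => act (C s) s * Rrow s).prod =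
      W * (L.map fun s => act (C s) s * Piop s).prod := by
  induction L generalizing W with
  | nil => rfl
  | cons s L ih =>
    have hmem : ∀ x, x ∈ L ↔ s < x := by
      simp [(List.pairwise_lt_finRange n).eq_filter_lt_of_cons_suffix hL]
    have hsL : s ∉ L := fun h => lt_irrefl s ((hmem s).1 h)
    have hWs : IsAntisymOn (W * act (C s) s) {x | x ∈ L} :=
      (hW.mono fun x hx => List.mem_cons_of_mem s hx).mul_act (C s) hsL
    have hrow : W * act (C s) s * Rrow s = W * act (C s) s * Piop s :=
      (hWs.mono fun x hx => (hmem x).2 hx).mul_Rrow_eq_mul_Piop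
    have hWs' : IsAntisymOn (W * act (C s) s * Piop s) {x | x ∈ L} :=
      hWs.mul_Piop fun x hx h => absurd ((hmem x).1 h) (not_lt.2 hx)
    simp only [List.map_cons, List.prod_cons, ← mul_assoc]
    rw [hrow, ih ((List.suffix_cons s L).trans hL) hWs']

theorem antisym_bra_eq_antisym_braket_general
    (C : Fin n → Matrix (Fin n) (Fin n) A) :
    antisym * bra C = antisym * braket C :=
  (isAntisymOn_antisym _).mul_prod_act_Rrow_eq_mul_prod_act_Piop C List.suffix_rfl

theorem antisym_bra_eq_antisym_braket (hn : 1 ≤ n)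
    (C : Fin n → Matrix (Fin n) (Fin n) A) :
    antisym * bra C = antisym * braket C :=
  antisym_bra_eq_antisym_braket_general C

end
end

section
/- For 1 ≤ k < i₁ < i₂ < ⋯ < i_m ≤ n with m ≥ 1, in the group algebra K[S_n] one has A'_{n−k}·(k,i₁)·(k,i₂)⋯(k,i_m) = (−1)^{m−1}·A'_{n−k}·(k,i₁). -/
/-!
STATEMENT 2: For 1 ≤ k < i₁ < ⋯ < i_m ≤ n with m ≥ 1, in K[S_n],
A'_{n−k}·(k,i₁)·(k,i₂)⋯(k,i_m) = (−1)^{m−1}·A'_{n−k}·(k,i₁).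
The point `i : Fin n` carries the label `i+1`; the m ≥ 1 elements
i₁ < ⋯ < i_m are encoded as a strictly monotone map `i : Fin (m+1) → Fin n`
(so the paper's m is `m+1` here and (−1)^{m−1} is `(−1)^m`).
-/

noncomputable section

variable {n : ℕ}

/-- The transposition (a,b) as an element of the group algebra K[S_n]. -/
def T (a b : Fin n) : MonoidAlgebra K (Equiv.Perm (Fin n)) :=
  MonoidAlgebra.of K (Equiv.Perm (Fin n)) (Equiv.swap a b)

/-- `Aprime m` = A'_{n−m}: the signed sum of all permutations fixing the
points with labels 1,…,m (i.e. the points `i : Fin n` with `(i:ℕ) < m`). -/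
def Aprime (m : ℕ) : MonoidAlgebra K (Equiv.Perm (Fin n)) :=
  ∑ σ ∈ Finset.univ.filter (fun σ : Equiv.Perm (Fin n) => ∀ i : Fin n, (i : ℕ) < m → σ i = i),
    (((Equiv.Perm.sign σ : ℤ) : K)) • MonoidAlgebra.of K (Equiv.Perm (Fin n)) σ

/-!
Conjugating by `(k,a)` gives `(k,a)(k,b) = (a,b)(k,a)`. When `a, b > k`, the transposition
`(a,b)` fixes `1,…,k` and is odd, and `A'_{n−k}` absorbs every permutation `σ` fixing `1,…,k`
up to the scalar `sgn σ`. Hence `A'_{n−k}(k,a)(k,b) = −A'_{n−k}(k,a)`, and each of the factors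
`(k,i₂),…,(k,i_m)` can be removed at the cost of a sign.
-/

theorem Equiv.swap_mul_swap_eq_swap_mul_swap {α : Type*} [DecidableEq α] {k a b : α}
    (hbk : b ≠ k) (hba : b ≠ a) :
    swap k a * swap k b = swap a b * swap k a := by
  rw [← swap_mul_swap_mul_swap hbk hba, mul_assoc, swap_mul_self, mul_one, swap_comm b k]

theorem aprime_mul_of_eq_sign_smul (M : ℕ) {σ : Equiv.Perm (Fin n)}
    (hσ : ∀ j : Fin n, (j : ℕ) < M → σ j = j) :
    Aprime M * MonoidAlgebra.of K _ σ = ((Equiv.Perm.sign σ : ℤ) : K) • Aprime (n := n) M := by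
  have hσinv : ∀ j : Fin n, (j : ℕ) < M → σ⁻¹ j = j := fun j hj =>
    Equiv.Perm.inv_eq_iff_eq.mpr (hσ j hj).symm
  rw [Aprime, Finset.sum_mul, Finset.smul_sum]
  refine Finset.sum_nbij' (· * σ) (· * σ⁻¹) ?_ ?_ (fun _ _ => by simp) (fun _ _ => by simp) ?_
  · intro τ hτ
    simp only [Finset.mem_filter, Finset.mem_univ, true_and] at hτ ⊢
    intro j hj
    rw [Equiv.Perm.mul_apply, hσ j hj, hτ j hj]
  · intro τ hτ
    simp only [Finset.mem_filter, Finset.mem_univ, true_and] at hτ ⊢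
    intro j hj
    rw [Equiv.Perm.mul_apply, hσinv j hj, hτ j hj]
  · intro τ _
    have hsq : ((Equiv.Perm.sign σ : ℤ) : K) * ((Equiv.Perm.sign σ : ℤ) : K) = 1 := by
      rw [← Int.cast_mul, ← Units.val_mul, Int.units_mul_self, Units.val_one, Int.cast_one]
    simp only [smul_mul_assoc, MonoidAlgebra.of_apply, MonoidAlgebra.single_mul_single, mul_one,
      map_mul, Units.val_mul, Int.cast_mul, smul_smul]
    rw [mul_left_comm, hsq, mul_one]

theorem aprime_mul_T_eq_neg (M : ℕ) {a b : Fin n} (hab : a ≠ b) (ha : M ≤ a) (hb : M ≤ b) :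
    Aprime M * T a b = -Aprime M := by
  have hfix : ∀ j : Fin n, (j : ℕ) < M → Equiv.swap a b j = j := fun j hj =>
    Equiv.swap_apply_of_ne_of_ne (by rintro rfl; omega) (by rintro rfl; omega)
  rw [T, aprime_mul_of_eq_sign_smul M hfix, Equiv.Perm.sign_swap hab]
  simp

theorem aprime_mul_T_mul_T {M : ℕ} {k a b : Fin n} (hbk : b ≠ k) (hab : a ≠ b)
    (ha : M ≤ a) (hb : M ≤ b) :
    Aprime M * T k a * T k b = -(Aprime M * T k a) := by
  calc Aprime M * T k a * T k b = Aprime M * T a b * T k a := by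
        simp only [T, mul_assoc, ← map_mul, Equiv.swap_mul_swap_eq_swap_mul_swap hbk hab.symm]
    _ = -(Aprime M * T k a) := by rw [aprime_mul_T_eq_neg M hab ha hb, neg_mul]

theorem aprime_mul_T_mul_prod_T {M : ℕ} {k a : Fin n} (ha : M ≤ a) (L : List (Fin n))
    (hL : ∀ b ∈ L, b ≠ k ∧ b ≠ a ∧ M ≤ b) :
    Aprime M * T k a * (L.map (T k)).prod = (-1 : K) ^ L.length • (Aprime M * T k a) := by
  induction L with
  | nil => simp
  | cons b L ih =>
    obtain ⟨hbk, hba, hb⟩ := hL b List.mem_cons_self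
    rw [List.map_cons, List.prod_cons, ← mul_assoc,
      aprime_mul_T_mul_T hbk (Ne.symm hba) ha hb, neg_mul,
      ih fun c hc => hL c (List.mem_cons_of_mem b hc), List.length_cons, pow_succ, mul_comm,
      ← smul_smul, neg_one_smul]

theorem aprime_mul_swaps (k : Fin n) (m : ℕ) (i : Fin (m + 1) → Fin n)
    (hmono : StrictMono i) (hk : k < i 0) :
    Aprime ((k : ℕ) + 1) * ((List.finRange (m + 1)).map (fun t => T k (i t))).prod =
      ((-1 : K) ^ m) • (Aprime ((k : ℕ) + 1) * T k (i 0)) := by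
  have hsucc : ∀ t : Fin m, i t.succ ≠ k ∧ i t.succ ≠ i 0 ∧ (k : ℕ) + 1 ≤ i t.succ := by
    intro t
    have h0 : i 0 < i t.succ := hmono t.succ_pos
    exact ⟨(hk.trans h0).ne', h0.ne', hk.trans h0⟩
  have hsplit : (List.finRange (m + 1)).map (fun t => T k (i t))
      = T k (i 0) :: ((List.finRange m).map (fun t => i t.succ)).map (T k) := by
    simp [List.finRange_succ, List.map_map, Function.comp_def]
  rw [hsplit, List.prod_cons, ← mul_assoc,
    aprime_mul_T_mul_prod_T (Nat.succ_le_of_lt hk) _ (by simpa using hsucc),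
    List.length_map, List.length_finRange]
end
end

section
/- Let η ∈ I_n. Write Im(η) = {N_1,…,N_K}; for each l write the preimage η⁻¹(N_l) = {a_{l,1} < a_{l,2} < ⋯ < a_{l,m_l}} and let Γ_l be the cyclic permutation (a_{l,1}, a_{l,2}, …, a_{l,m_l}); set γ_η := Γ_1∘⋯∘Γ_K (a product of disjoint increasing cycles), G_η^- := {a_{l,1} : l = 1,…,K} (the set of cycle minima), and G_η^+ := {a_{l,m_l} : l = 1,…,K} (the set of cycle maxima). Let S(η) be the set of permutations of {1,…,n} fixing every point outside Im(η), and M_η := C_1^(η(1))·C_2^(η(2))⋯C_n^(η(n)). Then for every σ ∈ S(η) and arbitrary n×n matrices C_1,…,C_n over A, the entry of M_η at row tuple (σ(1),…,σ(n)) and column tuple (1,…,n) equals ∑_s ∏_{k=1}^n (C_k)_{p(k),q(k)}, where the sum runs over all functions s : {1,…,n} ∖ G_η^- → {1,…,n}, and p(k) := σ(η(k)) if k ∈ G_η^- and p(k) := s(k) otherwise, while q(k) := η(k) if k ∈ G_η^+ and q(k) := s(γ_η(k)) otherwise. -/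
/-!
STATEMENT 13: The entry of M_η = C_1^(η(1))⋯C_n^(η(n)) at row tuple
(σ(1),…,σ(n)) and column tuple (1,…,n), for σ ∈ S(η), equals
∑_s ∏_{k=1}^n (C_k)_{p(k),q(k)}, the sum over functions
s : {1,…,n} ∖ G_η^- → {1,…,n}, with p(k) = σ(η(k)) for k ∈ G_η^-, p(k) = s(k)
otherwise; q(k) = η(k) for k ∈ G_η^+, q(k) = s(γ_η(k)) otherwise.
Here G_η^- (resp. G_η^+) is the set of minima (resp. maxima) of the fibers of η,
and γ_η sends each fiber element to the next one cyclically (in increasing order).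
The point `i : Fin n` carries the label `i+1`.
-/

noncomputable section

variable {A : Type*} [Ring A] [Algebra K A] {n : ℕ}

/-- M_η = C_1^(η(1))·C_2^(η(2))⋯C_n^(η(n)). -/
def Mmat (C : Fin n → Matrix (Fin n) (Fin n) A) (η : Fin n → Fin n) : Op A n :=
  ((List.finRange n).map (fun s => act (C s) (η s))).prod

/-- G_η^-: the elements that are minimal in their fiber of η
(the minima a_{l,1} of the cycles of γ_η). -/
def Gminus (η : Fin n → Fin n) : Finset (Fin n) :=
  Finset.univ.filter (fun k => ∀ j, η j = η k → k ≤ j)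

/-- G_η^+: the elements that are maximal in their fiber of η
(the maxima a_{l,m_l} of the cycles of γ_η). -/
def Gplus (η : Fin n → Fin n) : Finset (Fin n) :=
  Finset.univ.filter (fun k => ∀ j, η j = η k → j ≤ k)

/-- γ_η: each fiber {a_{l,1} < ⋯ < a_{l,m_l}} of η is permuted by the
increasing cycle (a_{l,1},…,a_{l,m_l}); i.e. k is sent to the smallest fiber
element larger than k, or to the smallest fiber element when k is the largest. -/
def gam (η : Fin n → Fin n) (k : Fin n) : Fin n :=
  if h : (Finset.univ.filter (fun j => η j = η k ∧ k < j)).Nonempty then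
    (Finset.univ.filter (fun j => η j = η k ∧ k < j)).min' h
  else
    (Finset.univ.filter (fun j => η j = η k)).min'
      ⟨k, by simp⟩

/-- Extension of s : {1,…,n} ∖ G_η^- → {1,…,n} to all of {1,…,n}
(the values on G_η^- are irrelevant junk). -/
def sext (η : Fin n → Fin n) (s : {k : Fin n // k ∉ Gminus η} → Fin n)
    (k : Fin n) : Fin n :=
  if h : k ∈ Gminus η then k else s ⟨k, h⟩

/-!
Expanding the product of the factors `C_k^(η(k))` writes the entry as a sum over paths of basis
tuples `h_0 = σ, h_1, …, h_n = id` whose `k`-th step may only change coordinate `η k`; the path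
contributes `∏_k (C_k)_{h_k(η k), h_{k+1}(η k)}`. Along such a path coordinate `N` only moves at
the elements of the fibre `η⁻¹(N)`, so it is `σ N` up to the fibre minimum and `N` after the fibre
maximum (and `σ N = N` if the fibre is empty), and in between it is the row index of the next
factor acting on it. Hence the path is determined by the free row indices `s k = h_k(η k)`,
`k ∉ G_η^-`, every `s` arises, and the column index of factor `k` is the row index of factor
`γ_η k`, or `η k` at a fibre maximum.
-/

theorem Matrix.list_prod_ofFn_apply {S R : Type*} [Fintype S] [DecidableEq S] [Semiring R]
    {m : ℕ} (M : Fin m → Matrix S S R) (a b : S) :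
    (List.ofFn M).prod a b = ∑ p : Fin (m + 1) → S,
      if p 0 = a ∧ p (Fin.last m) = b then
        (List.ofFn fun k => M k (p k.castSucc) (p k.succ)).prod
      else 0 := by
  induction m generalizing a with
  | zero =>
    rw [← (Equiv.funUnique (Fin 1) S).symm.sum_comp]
    have : Fin.last 0 = 0 := rfl
    simp [Matrix.one_apply, this, ite_and, eq_comm]
  | succ m ih =>
    rw [← (Fin.consEquiv fun _ => S).sum_comp, Fintype.sum_prod_type, List.ofFn_succ,
      List.prod_cons, Matrix.mul_apply]
    simp only [ih, Finset.mul_sum]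
    rw [Finset.sum_comm]
    simp [Fin.consEquiv, List.ofFn_succ, ite_and]

theorem Fin.apply_eq_apply_of_forall_castSucc_eq_succ {α : Type*} {n : ℕ} (h : Fin (n + 1) → α)
    {a b : Fin (n + 1)} (hab : a ≤ b)
    (hstep : ∀ k : Fin n, a ≤ k.castSucc → k.succ ≤ b → h k.succ = h k.castSucc) :
    h a = h b := by
  induction b using Fin.induction with
  | zero => rw [Fin.le_zero_iff.mp hab]
  | succ k ih =>
    rcases hab.eq_or_lt with rfl | hlt
    · rfl
    · have hak : a ≤ k.castSucc := Fin.le_castSucc_iff.mpr hlt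
      rw [ih hak fun j hj hjk => hstep j hj (hjk.trans (Fin.castSucc_le_succ k)),
        hstep k hak le_rfl]

lemma act_apply_of_forall_ne {R : Type*} [Ring R] (C : Matrix (Fin n) (Fin n) R) (s : Fin n)
    {f g : Fin n → Fin n} (hfg : ∀ t, t ≠ s → f t = g t) : act C s f g = C (f s) (g s) :=
  if_pos hfg

lemma act_apply_eq_zero {R : Type*} [Ring R] (C : Matrix (Fin n) (Fin n) R) {s t : Fin n}
    {f g : Fin n → Fin n} (ht : t ≠ s) (hfg : f t ≠ g t) : act C s f g = 0 :=
  if_neg fun h => hfg (h t ht)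

lemma list_prod_ofFn_act_path {R : Type*} [Ring R] (C : Fin n → Matrix (Fin n) (Fin n) R)
    (η : Fin n → Fin n) (h : Fin (n + 1) → Fin n → Fin n) :
    (List.ofFn fun k => act (C k) (η k) (h k.castSucc) (h k.succ)).prod =
      if ∀ k t, t ≠ η k → h k.castSucc t = h k.succ t then
        (List.ofFn fun k => C k (h k.castSucc (η k)) (h k.succ (η k))).prod
      else 0 := by
  split_ifs with hstep
  · simp only [act_apply_of_forall_ne _ _ (hstep _)]
  · push Not at hstep
    obtain ⟨k, t, ht, hkt⟩ := hstep
    exact List.prod_eq_zero (List.mem_ofFn.mpr ⟨k, act_apply_eq_zero _ ht hkt⟩)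

lemma mem_Gminus {η : Fin n → Fin n} {k : Fin n} :
    k ∈ Gminus η ↔ ∀ j, η j = η k → k ≤ j := by
  simp [Gminus]

lemma mem_Gplus {η : Fin n → Fin n} {k : Fin n} :
    k ∈ Gplus η ↔ ∀ j, η j = η k → j ≤ k := by
  simp [Gplus]

section StatePath

variable (η : Fin n → Fin n) (σ : Equiv.Perm (Fin n)) (s : {k : Fin n // k ∉ Gminus η} → Fin n)

def rowIndex (k : Fin n) : Fin n :=
  if k ∈ Gminus η then σ (η k) else sext η s k

def colIndex (k : Fin n) : Fin n :=
  if k ∈ Gplus η then η k else sext η s (gam η k)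

def stepsFrom (m : Fin (n + 1)) (N : Fin n) : Finset (Fin n) :=
  Finset.univ.filter fun j => m ≤ j.castSucc ∧ η j = N

/-- The state at time `m` of the path given by `s`: coordinate `N` carries the row index of the
next factor `C_j` acting on it, or its final value `N` if none is left. -/
def statePath (m : Fin (n + 1)) (N : Fin n) : Fin n :=
  if h : (stepsFrom η m N).Nonempty then rowIndex η σ s ((stepsFrom η m N).min' h) else N

def IsStatePath (h : Fin (n + 1) → Fin n → Fin n) : Prop :=
  h 0 = σ ∧ h (Fin.last n) = id ∧ ∀ k t, t ≠ η k → h k.castSucc t = h k.succ t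

variable {η σ}

@[simp]
lemma mem_stepsFrom {m : Fin (n + 1)} {N j : Fin n} :
    j ∈ stepsFrom η m N ↔ m ≤ j.castSucc ∧ η j = N := by
  simp [stepsFrom]

lemma self_mem_stepsFrom (k : Fin n) : k ∈ stepsFrom η k.castSucc (η k) := by
  simp

lemma min'_stepsFrom_castSucc_self (k : Fin n) :
    (stepsFrom η k.castSucc (η k)).min' ⟨k, self_mem_stepsFrom k⟩ = k :=
  le_antisymm (Finset.min'_le _ _ (self_mem_stepsFrom k))
    (by simpa using (mem_stepsFrom.mp (Finset.min'_mem _ ⟨k, self_mem_stepsFrom k⟩)).1)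

lemma statePath_zero (hσ : ∀ j, (∀ i, η i ≠ j) → σ j = j) : statePath η σ s 0 = σ := by
  funext N
  unfold statePath
  split_ifs with hne
  · obtain ⟨-, hj⟩ := mem_stepsFrom.mp (Finset.min'_mem _ hne)
    have hmin : (stepsFrom η 0 N).min' hne ∈ Gminus η :=
      mem_Gminus.mpr fun i hi => Finset.min'_le _ _ (by simp [hi.trans hj])
    rw [rowIndex, if_pos hmin, hj]
  · exact (hσ N fun i hi => hne ⟨i, by simp [hi]⟩).symm

lemma statePath_last : statePath η σ s (Fin.last n) = id := by
  funext N
  simp [statePath, stepsFrom, Fin.le_def]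

lemma statePath_castSucc_self (k : Fin n) :
    statePath η σ s k.castSucc (η k) = rowIndex η σ s k := by
  rw [statePath, dif_pos ⟨k, self_mem_stepsFrom k⟩, min'_stepsFrom_castSucc_self]

lemma statePath_succ_self (k : Fin n) :
    statePath η σ s k.succ (η k) = colIndex η s k := by
  set F := Finset.univ.filter fun j => η j = η k ∧ k < j
  have hsteps : stepsFrom η k.succ (η k) = F := by
    ext j
    simp [F, Fin.succ_le_castSucc_iff, and_comm]
  have hF : F.Nonempty ↔ k ∉ Gplus η := by
    simp [F, mem_Gplus, Finset.Nonempty]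
  rw [statePath, colIndex, gam, hsteps]
  by_cases hk : k ∈ Gplus η
  · rw [dif_neg (hF.not.mpr (not_not.mpr hk)), if_pos hk]
  · have hsome := hF.mpr hk
    obtain ⟨-, hfib, hlt⟩ := Finset.mem_filter.mp (Finset.min'_mem F hsome)
    have hmin : F.min' hsome ∉ Gminus η := fun h => not_le.mpr hlt (mem_Gminus.mp h k hfib.symm)
    rw [dif_pos hsome, dif_pos hsome, if_neg hk, rowIndex, if_neg hmin]

lemma statePath_succ_of_ne {k t : Fin n} (ht : t ≠ η k) :
    statePath η σ s k.succ t = statePath η σ s k.castSucc t := by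
  have hsteps : stepsFrom η k.succ t = stepsFrom η k.castSucc t := by
    ext j
    simp only [mem_stepsFrom, Fin.succ_le_castSucc_iff, Fin.castSucc_le_castSucc_iff,
      and_congr_left_iff]
    rintro rfl
    exact ⟨le_of_lt, fun hkj => lt_of_le_of_ne hkj (by rintro rfl; exact ht rfl)⟩
  simp only [statePath, hsteps]

lemma isStatePath_statePath (hσ : ∀ j, (∀ i, η i ≠ j) → σ j = j) :
    IsStatePath η σ (statePath η σ s) :=
  ⟨statePath_zero s hσ, statePath_last s, fun _ _ ht => (statePath_succ_of_ne s ht).symm⟩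

lemma statePath_castSucc_self_of_not_mem (k : {k : Fin n // k ∉ Gminus η}) :
    statePath η σ s k.1.castSucc (η k.1) = s k := by
  rw [statePath_castSucc_self, rowIndex, if_neg k.2, sext, dif_neg k.2]

lemma IsStatePath.apply_castSucc_of_mem_Gminus {h : Fin (n + 1) → Fin n → Fin n}
    (hh : IsStatePath η σ h) {j : Fin n} (hj : j ∈ Gminus η) :
    h j.castSucc (η j) = σ (η j) := by
  rw [← hh.1]
  refine (Fin.apply_eq_apply_of_forall_castSucc_eq_succ (fun m => h m (η j)) (Fin.zero_le _)
    fun k _ hkj => (hh.2.2 k (η j) fun hjk => ?_).symm).symm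
  exact not_lt.mpr (mem_Gminus.mp hj k hjk.symm) (Fin.succ_le_castSucc_iff.mp hkj)

lemma IsStatePath.eq_statePath {h : Fin (n + 1) → Fin n → Fin n} (hh : IsStatePath η σ h) :
    h = statePath η σ (fun k => h k.1.castSucc (η k.1)) := by
  funext m N
  unfold statePath
  split_ifs with hne
  · obtain ⟨hmj, hj⟩ := mem_stepsFrom.mp (Finset.min'_mem _ hne)
    have hconst : h m N = h ((stepsFrom η m N).min' hne).castSucc N :=
      Fin.apply_eq_apply_of_forall_castSucc_eq_succ (fun m => h m N) hmj
        fun k hmk hkj => (hh.2.2 k N fun hN => not_lt.mpr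
          (Finset.min'_le _ k (by simp [hmk, hN])) (Fin.succ_le_castSucc_iff.mp hkj)).symm
    rw [hconst]
    generalize (stepsFrom η m N).min' hne = j at hj
    subst hj
    rw [rowIndex]
    split_ifs with hjG
    · exact hh.apply_castSucc_of_mem_Gminus hjG
    · rw [sext, dif_neg hjG]
  · rw [Fin.apply_eq_apply_of_forall_castSucc_eq_succ (fun m => h m N) (Fin.le_last m)
      fun k hmk _ => (hh.2.2 k N fun hN => hne ⟨k, by simp [hmk, hN]⟩).symm, hh.2.1, id]

end StatePath

theorem Mmat_entry_general (C : Fin n → Matrix (Fin n) (Fin n) A)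
    (η : Fin n → Fin n) (σ : Equiv.Perm (Fin n))
    (hσ : ∀ j, (∀ i, η i ≠ j) → σ j = j) :
    (Mmat C η : Op A n) (fun t => σ t) (fun t => t) =
      ∑ s : ({k : Fin n // k ∉ Gminus η} → Fin n),
        ((List.finRange n).map (fun k =>
          C k (if k ∈ Gminus η then σ (η k) else sext η s k)
              (if k ∈ Gplus η then η k else sext η s (gam η k)))).prod := by
  classical
  simp only [Mmat, ← List.ofFn_eq_map]
  calc
    _ = ∑ h ∈ Finset.univ.filter (IsStatePath η σ),
          (List.ofFn fun k => C k (h k.castSucc (η k)) (h k.succ (η k))).prod := by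
      rw [Matrix.list_prod_ofFn_apply, Finset.sum_filter]
      refine Finset.sum_congr rfl fun h _ => ?_
      rw [list_prod_ofFn_act_path, ← ite_and]
      exact if_congr and_assoc rfl rfl
    _ = _ := by
      refine (Finset.sum_nbij' (statePath η σ) (fun h k => h k.1.castSucc (η k.1))
        (fun s _ => Finset.mem_filter.mpr ⟨Finset.mem_univ _, isStatePath_statePath s hσ⟩)
        (fun _ _ => Finset.mem_univ _)
        (fun s _ => funext (statePath_castSucc_self_of_not_mem s))
        (fun h hh => (Finset.mem_filter.mp hh).2.eq_statePath.symm)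
        fun s _ => ?_).symm
      simp only [statePath_castSucc_self, statePath_succ_self, rowIndex, colIndex]

theorem Mmat_entry (hn : 1 ≤ n) (C : Fin n → Matrix (Fin n) (Fin n) A)
    (η : Fin n → Fin n) (hη : ∀ i, i ≤ η i) (σ : Equiv.Perm (Fin n))
    (hσ : ∀ j, (∀ i, η i ≠ j) → σ j = j) :
    (Mmat C η : Op A n) (fun t => σ t) (fun t => t) =
      ∑ s : ({k : Fin n // k ∉ Gminus η} → Fin n),
        ((List.finRange n).map (fun k =>
          C k (if k ∈ Gminus η then σ (η k) else sext η s k)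
              (if k ∈ Gplus η then η k else sext η s (gam η k)))).prod :=
  Mmat_entry_general C η σ hσ

end
end
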